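/- arXiv:2208.05555 — 2 statements merged into one kernel-verified Lean document; each statement's English description precedes it below -/
import Mathlib

section
/- Let T be a transfer system on a finite group G (a partial order on subgroups refining inclusion, closed under conjugation and intersection). If K ≤_T H for subgroups K ≤ H ≤ G, then core_G(K) ≤_T core_G(H), where core_G(A) is the intersection of all G-conjugates of A. In particular if H ≤_T G then core_G(H) ≤_T G. -/
/-- A transfer system on a finite group `G`. -/
structure TransferSystem (G : Type*) [Group G] where
  rel : Subgroup G → Subgroup G → Prop
  rel_refl : ∀ H : Subgroup G, rel H H
  rel_trans : ∀ {K L M : Subgroup G}, rel K L → rel L M → rel K M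
  rel_antisymm : ∀ {K L : Subgroup G}, rel K L → rel L K → K = L
  le_of_rel : ∀ {K H : Subgroup G}, rel K H → K ≤ H
  conj_closed : ∀ {K H : Subgroup G} (g : G), rel K H →
    rel (K.map (MulAut.conj g).toMonoidHom) (H.map (MulAut.conj g).toMonoidHom)
  inter_closed : ∀ {K H : Subgroup G} (L : Subgroup G), rel K H → rel (K ⊓ L) (H ⊓ L)

/-- The core of a subgroup: the intersection of all its conjugates. -/
def coreG {G : Type*} [Group G] (A : Subgroup G) : Subgroup G :=
  ⨅ g : G, A.map (MulAut.conj g).toMonoidHom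

/-! Restricting `K ≤_T H` to each conjugate and intersecting the finitely many results gives
`core_G(K) ≤_T core_G(H)`; this is where finiteness of `G` enters, since a transfer system
is only closed under finite intersections. -/

namespace TransferSystem

variable {G : Type*} [Group G] (T : TransferSystem G)

theorem rel_inf {A B C D : Subgroup G} (hAB : T.rel A B) (hCD : T.rel C D) :
    T.rel (A ⊓ C) (B ⊓ D) := by
  have hCB : T.rel (B ⊓ C) (B ⊓ D) := by
    simpa only [inf_comm B] using T.inter_closed B hCD
  exact T.rel_trans (T.inter_closed C hAB) hCB

theorem rel_finsetInf {ι : Type*} (s : Finset ι) {f g : ι → Subgroup G}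
    (hfg : ∀ i, T.rel (f i) (g i)) : T.rel (s.inf f) (s.inf g) := by
  classical
  induction s using Finset.induction_on with
  | empty => exact T.rel_refl ⊤
  | insert i s _ ih =>
    rw [Finset.inf_insert, Finset.inf_insert]
    exact T.rel_inf (hfg i) ih

theorem rel_iInf {ι : Type*} [Finite ι] {f g : ι → Subgroup G}
    (hfg : ∀ i, T.rel (f i) (g i)) : T.rel (⨅ i, f i) (⨅ i, g i) := by
  cases nonempty_fintype ι
  simpa only [Finset.inf_univ_eq_iInf] using T.rel_finsetInf Finset.univ hfg

theorem rel_coreG [Finite G] {K H : Subgroup G} (hKH : T.rel K H) :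
    T.rel (coreG K) (coreG H) :=
  T.rel_iInf fun g => T.conj_closed g hKH

end TransferSystem

theorem coreG_top {G : Type*} [Group G] : coreG (⊤ : Subgroup G) = ⊤ := by
  simp only [coreG, fun g : G =>
    Subgroup.map_top_of_surjective (MulAut.conj g).toMonoidHom (MulAut.conj g).surjective,
    iInf_const]

/-- If `K ≤_T H` then `core_G(K) ≤_T core_G(H)`; in particular if `H ≤_T G` then
`core_G(H) ≤_T G`. -/
theorem stmt4 {G : Type*} [Group G] [Finite G] (T : TransferSystem G) :
    (∀ K H : Subgroup G, T.rel K H → T.rel (coreG K) (coreG H)) ∧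
    (∀ H : Subgroup G, T.rel H ⊤ → T.rel (coreG H) ⊤) :=
  ⟨fun _ _ => T.rel_coreG, fun _ hH => coreG_top (G := G) ▸ T.rel_coreG hH⟩
end

section
/- Let G be a finite group. Define the pair of transfer systems (T₁, T₂) on C₂ × C₂ by: T₂ is generated by the relations e ≤ C₂×e, e ≤ e×C₂, e ≤ Δ, e×C₂ ≤ C₂×C₂ (with Δ the diagonal subgroup), together with everything forced by reflexivity, transitivity, conjugation, and intersection closure; and T₁ consists of e ≤ C₂×e, e ≤ Δ, e×C₂ ≤ C₂×C₂ plus reflexivity. Show that the compatibility condition fails: taking A = C₂×C₂, B = e×C₂, C = Δ, one has B ≤_{T₁} A and B∩C = e ≤_{T₂} B, but C = Δ is not ≤_{T₂} A = C₂×C₂. -/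
/-- The Klein four group `C₂ × C₂`. -/
abbrev V4 := ZMod 2 × ZMod 2

/-- The subgroup `C₂ × e`. -/
def P10 : AddSubgroup V4 := (⊤ : AddSubgroup (ZMod 2)).prod ⊥

/-- The subgroup `e × C₂`. -/
def P01 : AddSubgroup V4 := (⊥ : AddSubgroup (ZMod 2)).prod ⊤

/-- The diagonal subgroup `Δ`. -/
def Δ' : AddSubgroup V4 := ((AddMonoidHom.id (ZMod 2)).prod (AddMonoidHom.id (ZMod 2))).range

/-- A transfer system on the (abelian) group `C₂ × C₂`: a partial order on subgroups
refining inclusion and closed under intersection (conjugation closure is automatic). -/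
def IsTS (r : AddSubgroup V4 → AddSubgroup V4 → Prop) : Prop :=
  (∀ K, r K K) ∧ (∀ K L M, r K L → r L M → r K M) ∧
  (∀ K L, r K L → K ≤ L) ∧ (∀ K L M, r K L → r (K ⊓ M) (L ⊓ M))

/-- The transfer system `T₁`: `e ≤ C₂×e`, `e ≤ Δ`, `e×C₂ ≤ C₂×C₂` plus reflexivity. -/
def T1 : AddSubgroup V4 → AddSubgroup V4 → Prop := fun K H =>
  K = H ∨ (K = ⊥ ∧ H = P10) ∨ (K = ⊥ ∧ H = Δ') ∨ (K = P01 ∧ H = ⊤)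

/-- The transfer system `T₂` generated by `e ≤ C₂×e`, `e ≤ e×C₂`, `e ≤ Δ`,
`e×C₂ ≤ C₂×C₂`, i.e. the smallest transfer system containing these relations. -/
def T2 : AddSubgroup V4 → AddSubgroup V4 → Prop := fun K H =>
  ∀ r : AddSubgroup V4 → AddSubgroup V4 → Prop, IsTS r →
    r ⊥ P10 → r ⊥ P01 → r ⊥ Δ' → r P01 ⊤ → r K H

/-! `T₂` is, explicitly, the identities, every transfer out of `e`, and `e × C₂ → C₂ × C₂`:
this relation is a transfer system (restricting `e × C₂ → C₂ × C₂` to a subgroup gives an identity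
or a transfer out of `e`), it contains the generators, and each of its pairs is forced
(`e → C₂ × C₂` by transitivity through `e × C₂`). It does not contain `Δ → C₂ × C₂`.
The remaining checks run over the five subgroups of `C₂ × C₂`, each determined by which of the
three nonzero elements it contains. -/

@[simp] lemma mem_P10 (x : V4) : x ∈ P10 ↔ x.2 = 0 := by
  simp [P10, AddSubgroup.mem_prod]

@[simp] lemma mem_P01 (x : V4) : x ∈ P01 ↔ x.1 = 0 := by
  simp [P01, AddSubgroup.mem_prod]

@[simp] lemma mem_Δ' (x : V4) : x ∈ Δ' ↔ x.1 = x.2 := by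
  simp [Δ', Prod.ext_iff]

lemma V4_cases (x : V4) : x = 0 ∨ x = (1, 0) ∨ x = (0, 1) ∨ x = (1, 1) := by
  revert x; decide

lemma addSubgroup_eq_iff {M N : AddSubgroup V4} :
    M = N ↔ ((1, 0) ∈ M ↔ (1, 0) ∈ N) ∧ ((0, 1) ∈ M ↔ (0, 1) ∈ N) ∧
      ((1, 1) ∈ M ↔ (1, 1) ∈ N) := by
  refine ⟨by rintro rfl; simp, fun ⟨h10, h01, h11⟩ => ?_⟩
  ext x
  rcases V4_cases x with rfl | rfl | rfl | rfl
  exacts [iff_of_true M.zero_mem N.zero_mem, h10, h01, h11]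

lemma addSubgroup_cases (M : AddSubgroup V4) :
    M = ⊥ ∨ M = P10 ∨ M = P01 ∨ M = Δ' ∨ M = ⊤ := by
  have h10 : (1, 0) ∈ M → (0, 1) ∈ M → (1, 1) ∈ M := fun h h' => by
    simpa using M.add_mem h h'
  have h01 : (0, 1) ∈ M → (1, 1) ∈ M → (1, 0) ∈ M := fun h h' => by
    simpa [show (1 : ZMod 2) + 1 = 0 from rfl] using M.add_mem h h'
  have h11 : (1, 0) ∈ M → (1, 1) ∈ M → (0, 1) ∈ M := fun h h' => by
    simpa [show (1 : ZMod 2) + 1 = 0 from rfl] using M.add_mem h h'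
  simp only [addSubgroup_eq_iff, AddSubgroup.mem_bot, AddSubgroup.mem_top, mem_P10, mem_P01,
    mem_Δ', Prod.mk_eq_zero, one_ne_zero, and_false, and_true, iff_true, iff_false]
  tauto

lemma P01_inf_Δ' : P01 ⊓ Δ' = ⊥ := by
  simp [addSubgroup_eq_iff]

lemma transitive_eq_or {α : Type*} {g : α → α → Prop} (hg : ∀ a b c, g a b → ¬ g b c)
    (a b c : α) : (a = b ∨ g a b) → (b = c ∨ g b c) → a = c ∨ g a c := by
  rintro (rfl | hab) (rfl | hbc)
  exacts [Or.inl rfl, Or.inr hbc, Or.inr hab, (hg a b c hab hbc).elim]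

lemma isTS_T1 : IsTS T1 := by
  refine ⟨fun K => Or.inl rfl, transitive_eq_or ?_, ?_, ?_⟩
  · rintro K L M (⟨-, rfl⟩ | ⟨-, rfl⟩ | ⟨-, rfl⟩) (⟨h, -⟩ | ⟨h, -⟩ | ⟨h, -⟩) <;>
      simp [addSubgroup_eq_iff] at h
  · rintro K L (rfl | ⟨rfl, rfl⟩ | ⟨rfl, rfl⟩ | ⟨rfl, rfl⟩)
    exacts [le_rfl, bot_le, bot_le, le_top]
  · rintro K L M (rfl | ⟨rfl, rfl⟩ | ⟨rfl, rfl⟩ | ⟨rfl, rfl⟩)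
    · exact Or.inl rfl
    all_goals rcases addSubgroup_cases M with rfl | rfl | rfl | rfl | rfl <;>
      simp [T1, addSubgroup_eq_iff]

def T2Explicit : AddSubgroup V4 → AddSubgroup V4 → Prop := fun K H =>
  K = H ∨ K = ⊥ ∨ (K = P01 ∧ H = ⊤)

lemma isTS_T2Explicit : IsTS T2Explicit := by
  refine ⟨fun K => Or.inl rfl, ?_, ?_, ?_⟩
  · rintro K L M (rfl | rfl | ⟨rfl, rfl⟩) hLM
    · exact hLM
    · exact Or.inr (Or.inl rfl)
    · rcases hLM with rfl | h | ⟨h, -⟩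
      · exact Or.inr (Or.inr ⟨rfl, rfl⟩)
      all_goals simp [addSubgroup_eq_iff] at h
  · rintro K L (rfl | rfl | ⟨rfl, rfl⟩)
    exacts [le_rfl, bot_le, le_top]
  · rintro K L M (rfl | rfl | ⟨rfl, rfl⟩)
    · exact Or.inl rfl
    · exact Or.inr (Or.inl (bot_inf_eq M))
    · rcases addSubgroup_cases M with rfl | rfl | rfl | rfl | rfl <;>
        simp [T2Explicit, addSubgroup_eq_iff]

lemma T2_eq : T2 = T2Explicit := by
  ext K H
  refine ⟨fun h => h _ isTS_T2Explicit (.inr (.inl rfl)) (.inr (.inl rfl)) (.inr (.inl rfl))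
    (.inr (.inr ⟨rfl, rfl⟩)), ?_⟩
  rintro (rfl | rfl | ⟨rfl, rfl⟩) r ⟨hrefl, htrans, -, -⟩ h10 h01 hΔ h0t
  · exact hrefl K
  · rcases addSubgroup_cases H with rfl | rfl | rfl | rfl | rfl
    exacts [hrefl ⊥, h10, h01, hΔ, htrans _ _ _ h01 h0t]
  · exact h0t

lemma T1_le_T2 (K H : AddSubgroup V4) (h : T1 K H) : T2 K H := by
  rw [T2_eq]
  rcases h with rfl | ⟨rfl, -⟩ | ⟨rfl, -⟩ | h
  exacts [Or.inl rfl, Or.inr (Or.inl rfl), Or.inr (Or.inl rfl), Or.inr (Or.inr h)]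

/-- The pair `(T₁, T₂)` on `C₂ × C₂` fails compatibility: with `A = C₂×C₂`, `B = e×C₂`,
`C = Δ`, one has `B ≤_{T₁} A` and `B ∩ C = e ≤_{T₂} B`, but `C = Δ` is not `≤_{T₂} A`. -/
theorem stmt14 :
    IsTS T1 ∧ IsTS T2 ∧ (∀ K H, T1 K H → T2 K H) ∧
    T1 P01 ⊤ ∧ P01 ⊓ Δ' = ⊥ ∧ T2 (P01 ⊓ Δ') P01 ∧ ¬ T2 Δ' ⊤ := by
  refine ⟨isTS_T1, T2_eq ▸ isTS_T2Explicit, T1_le_T2, .inr (.inr (.inr ⟨rfl, rfl⟩)),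
    P01_inf_Δ', ?_, ?_⟩
  · rw [T2_eq, P01_inf_Δ']
    exact Or.inr (Or.inl rfl)
  · simp [T2_eq, T2Explicit, addSubgroup_eq_iff]
end
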